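/- arXiv:2412.07611 — 3 statements merged into one kernel-verified Lean document; each statement's English description precedes it below -/
import Mathlib

section
/- Let λ : ℝ → ℝ be twice differentiable, let Λ : ℝ → ℝ be differentiable with Λ′ = λ, fix δ ∈ {0,1}, reals h₀, h*, φ₀, φ*, and constants M > 0, c₂ > 0. Let u ∈ [0,1] and set ψ = φ₀ + u·φ*. Assume 0 < h₀ + u·h* ≤ M, λ(ψ) > 0, λ(ψ)·λ″(ψ) ≤ λ′(ψ)² (log-concavity of λ at ψ), and λ′(ψ) ≥ c₂. Then the function ω(u) = δ·log(h₀ + u·h*) + δ·log λ(φ₀ + u·φ*) − Λ(φ₀ + u·φ*) satisfies ω″(u) ≤ −( δ·h*²/M² + c₂·φ*² ). -/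
/-!
Along the segment, `ω = δ log H + δ log (λ ∘ ψ) - Λ ∘ ψ` with `H` and `ψ` affine, so
`ω'' = δ (H H'' - H'²) / H² + δ ((λ ∘ ψ)(λ ∘ ψ)'' - (λ ∘ ψ)'²) / (λ ∘ ψ)² - λ'(ψ) φ*²`.
Since `H'' = 0` and `H ≤ M`, the first term is at most `-δ h*² / M²`; the second is
`δ φ*² (λ λ'' - λ'²) / λ² ≤ 0` by log-concavity; and `λ'(ψ) ≥ c₂` bounds the third.
-/

open Filter Topology Real

theorem deriv_deriv_eq_of_eventually_hasDerivAt {𝕜 F : Type*} [NontriviallyNormedField 𝕜]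
    [NormedAddCommGroup F] [NormedSpace 𝕜 F] {f f' : 𝕜 → F} {x : 𝕜} {f'' : F}
    (hf : ∀ᶠ v in 𝓝 x, HasDerivAt f (f' v) v) (hf' : HasDerivAt f' f'' x) :
    deriv (deriv f) x = f'' := by
  have hderiv : deriv f =ᶠ[𝓝 x] f' := hf.mono fun v hv => hv.deriv
  rw [hderiv.deriv_eq, hf'.deriv]

theorem HasDerivAt.comp_affine {g : ℝ → ℝ} {g' p q v : ℝ} (hg : HasDerivAt g g' (p + v * q)) :
    HasDerivAt (fun w => g (p + w * q)) (g' * q) v :=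
  (hg.scomp v (((hasDerivAt_id' v).mul_const q).const_add p)).congr_deriv (by simp [mul_comm])

/-- `(log ∘ f)'' = (f f'' - f'²) / f²`, written as the derivative of `(log ∘ f)' = f' / f`. -/
theorem hasDerivAt_deriv_div_self {f f' : ℝ → ℝ} {x f'' : ℝ} (hf : HasDerivAt f (f' x) x)
    (hf' : HasDerivAt f' f'' x) (hx : f x ≠ 0) :
    HasDerivAt (fun v => f' v / f v) ((f x * f'' - f' x ^ 2) / f x ^ 2) x :=
  (hf'.div hf hx).congr_deriv (by ring)

theorem deriv_deriv_loglik_segment {lam Lam : ℝ → ℝ} {δ h₀ hs φ₀ φs u : ℝ}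
    (hlam1 : Differentiable ℝ lam) (hlam2 : DifferentiableAt ℝ (deriv lam) (φ₀ + u * φs))
    (hLam : ∀ x, HasDerivAt Lam (lam x) x)
    (hH : h₀ + u * hs ≠ 0) (hlam : lam (φ₀ + u * φs) ≠ 0) :
    deriv (deriv fun v => δ * log (h₀ + v * hs) + δ * log (lam (φ₀ + v * φs))
        - Lam (φ₀ + v * φs)) u
      = δ * (-hs ^ 2 / (h₀ + u * hs) ^ 2)
        + δ * (φs ^ 2 * (lam (φ₀ + u * φs) * deriv (deriv lam) (φ₀ + u * φs)
            - deriv lam (φ₀ + u * φs) ^ 2) / lam (φ₀ + u * φs) ^ 2)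
        - deriv lam (φ₀ + u * φs) * φs ^ 2 := by
  have hHd (v : ℝ) : HasDerivAt (fun w => h₀ + w * hs) hs v := by
    simpa using ((hasDerivAt_id' v).mul_const hs).const_add h₀
  have hlamd (v : ℝ) : HasDerivAt (fun w => lam (φ₀ + w * φs)) (deriv lam (φ₀ + v * φs) * φs) v :=
    (hlam1 _).hasDerivAt.comp_affine
  apply deriv_deriv_eq_of_eventually_hasDerivAt
    (f' := fun v => δ * (hs / (h₀ + v * hs))
      + δ * (deriv lam (φ₀ + v * φs) * φs / lam (φ₀ + v * φs)) - lam (φ₀ + v * φs) * φs)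
  · filter_upwards [(hHd u).continuousAt.eventually_ne hH,
      (hlamd u).continuousAt.eventually_ne hlam] with v hHv hlamv
    exact (((hHd v).log hHv).const_mul δ).add (((hlamd v).log hlamv).const_mul δ)
      |>.sub ((hLam _).comp_affine)
  · have hlog_H := hasDerivAt_deriv_div_self (f' := fun _ => hs) (hHd u) (hasDerivAt_const u hs) hH
    have hlog_lam := hasDerivAt_deriv_div_self (hlamd u)
      ((hlam2.hasDerivAt.comp_affine).mul_const φs) hlam
    exact ((hlog_H.const_mul δ).add (hlog_lam.const_mul δ)).sub
      ((hlam1 _).hasDerivAt.comp_affine.mul_const φs) |>.congr_deriv (by ring)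

theorem loglik_curvature_le {δ a M hs L L' L'' φs c₂ : ℝ} (hδ : 0 ≤ δ) (ha : 0 < a)
    (haM : a ≤ M) (hlogconc : L * L'' ≤ L' ^ 2) (hc₂ : c₂ ≤ L') :
    δ * (-hs ^ 2 / a ^ 2) + δ * (φs ^ 2 * (L * L'' - L' ^ 2) / L ^ 2) - L' * φs ^ 2
      ≤ -(δ * hs ^ 2 / M ^ 2 + c₂ * φs ^ 2) := by
  have hH : -hs ^ 2 / a ^ 2 ≤ -hs ^ 2 / M ^ 2 := by
    rw [neg_div, neg_div, neg_le_neg_iff]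
    gcongr
  have hlam : φs ^ 2 * (L * L'' - L' ^ 2) / L ^ 2 ≤ 0 :=
    div_nonpos_of_nonpos_of_nonneg
      (mul_nonpos_of_nonneg_of_nonpos (sq_nonneg _) (by linarith)) (sq_nonneg _)
  have hLam : c₂ * φs ^ 2 ≤ L' * φs ^ 2 := mul_le_mul_of_nonneg_right hc₂ (sq_nonneg _)
  have hδH := mul_le_mul_of_nonneg_left hH hδ
  have hδlam := mul_nonpos_of_nonneg_of_nonpos hδ hlam
  linarith [show δ * (-hs ^ 2 / M ^ 2) = -(δ * hs ^ 2 / M ^ 2) by ring]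

theorem second_deriv_loglik_upper_bound_general
    (lam Lam : ℝ → ℝ)
    (hlam1 : Differentiable ℝ lam)
    (hlam2 : Differentiable ℝ (deriv lam))
    (hLam : ∀ x, HasDerivAt Lam (lam x) x)
    (δ : ℝ) (hδ : δ = 0 ∨ δ = 1)
    (h₀ hs φ₀ φs M c₂ : ℝ)
    (u : ℝ)
    (hpos : 0 < h₀ + u * hs) (hle : h₀ + u * hs ≤ M)
    (hlam_pos : 0 < lam (φ₀ + u * φs))
    (hlogconc : lam (φ₀ + u * φs) * deriv (deriv lam) (φ₀ + u * φs)
        ≤ (deriv lam (φ₀ + u * φs)) ^ 2)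
    (hderiv_lb : c₂ ≤ deriv lam (φ₀ + u * φs))
    (ω : ℝ → ℝ)
    (hω : ∀ v, ω v = δ * Real.log (h₀ + v * hs)
        + δ * Real.log (lam (φ₀ + v * φs)) - Lam (φ₀ + v * φs)) :
    deriv (deriv ω) u ≤ -(δ * hs ^ 2 / M ^ 2 + c₂ * φs ^ 2) := by
  rw [funext hω, deriv_deriv_loglik_segment hlam1 (hlam2 _) hLam hpos.ne' hlam_pos.ne']
  have hδ_nonneg : 0 ≤ δ := by rcases hδ with rfl | rfl <;> norm_num
  exact loglik_curvature_le hδ_nonneg hpos hle hlogconc hderiv_lb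

/-- Upper curvature bound (display (A2)) in the proof of Lemma 2 of
"Deep partially linear transformation model for right-censored survival data". -/
theorem second_deriv_loglik_upper_bound
    (lam Lam : ℝ → ℝ)
    (hlam1 : Differentiable ℝ lam)
    (hlam2 : Differentiable ℝ (deriv lam))
    (hLam : ∀ x, HasDerivAt Lam (lam x) x)
    (δ : ℝ) (hδ : δ = 0 ∨ δ = 1)
    (h₀ hs φ₀ φs M c₂ : ℝ) (hM : 0 < M) (hc₂ : 0 < c₂)
    (u : ℝ) (hu : u ∈ Set.Icc (0 : ℝ) 1)
    (hpos : 0 < h₀ + u * hs) (hle : h₀ + u * hs ≤ M)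
    (hlam_pos : 0 < lam (φ₀ + u * φs))
    (hlogconc : lam (φ₀ + u * φs) * deriv (deriv lam) (φ₀ + u * φs)
        ≤ (deriv lam (φ₀ + u * φs)) ^ 2)
    (hderiv_lb : c₂ ≤ deriv lam (φ₀ + u * φs))
    (ω : ℝ → ℝ)
    (hω : ∀ v, ω v = δ * Real.log (h₀ + v * hs)
        + δ * Real.log (lam (φ₀ + v * φs)) - Lam (φ₀ + v * φs)) :
    deriv (deriv ω) u ≤ -(δ * hs ^ 2 / M ^ 2 + c₂ * φs ^ 2) :=
  second_deriv_loglik_upper_bound_general lam Lam hlam1 hlam2 hLam δ hδ h₀ hs φ₀ φs M c₂ u hpos hle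
    hlam_pos hlogconc hderiv_lb ω hω
end

section
/- Let λ : ℝ → ℝ be twice differentiable with λ > 0, let Λ : ℝ → ℝ be differentiable with Λ′ = λ, and fix δ ∈ {0,1}, reals h₀, h₁, φ₀, φ₁, and constants 0 < m ≤ M, 0 < c₂ ≤ B, A ≥ 0. Let J be the closed interval with endpoints φ₀ and φ₁, and assume: m ≤ h₀ ≤ M and m ≤ h₁ ≤ M; and for every ψ ∈ J, λ(ψ)·λ″(ψ) ≤ λ′(ψ)², λ(ψ)·λ″(ψ) − λ′(ψ)² ≥ −A·λ(ψ)², and c₂ ≤ λ′(ψ) ≤ B. Define ω(u) = δ·log(h₀ + u·(h₁−h₀)) + δ·log λ(φ₀ + u·(φ₁−φ₀)) − Λ(φ₀ + u·(φ₁−φ₀)) for u ∈ [0,1]. Then −(1/2)·( δ·(h₁−h₀)²/m² + (A+B)·(φ₁−φ₀)² ) ≤ ω(1) − ω(0) − ω′(0) ≤ −(1/2)·( δ·(h₁−h₀)²/M² + c₂·(φ₁−φ₀)² ). -/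
/-!
Along the segment, `ω u = δ log h(u) + g(φ(u))` with `h`, `φ` affine and `g = δ log λ - Λ`, so
`ω 1 - ω 0 - ω' 0 = ω''(ξ) / 2` for some `ξ ∈ (0, 1)` (Taylor with Lagrange remainder), and
`ω'' = -δ (h₁ - h₀)² / h² + g''(φ) (φ₁ - φ₀)²` with
`g'' = δ (λ λ'' - λ'²) / λ² - λ'`. The hypotheses pin `(λ λ'' - λ'²) / λ²` to `[-A, 0]` and `λ'`
to `[c₂, B]`, hence `g'' ∈ [-(A + B), -c₂]` as `0 ≤ δ ≤ 1`, while `h ∈ [m, M]`.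
-/

open Set Real

/- Cauchy's mean value theorem for `x ↦ f x + (b - x) * f' x` and `x ↦ -(b - x) ^ 2 / 2`,
whose derivatives are `(b - x) * f'' x` and `b - x`. -/
theorem taylor_mean_remainder_lagrange_two {f f' f'' : ℝ → ℝ} {a b : ℝ} (hab : a < b)
    (hf : ∀ x ∈ Icc a b, HasDerivAt f (f' x) x) (hf' : ∀ x ∈ Icc a b, HasDerivAt f' (f'' x) x) :
    ∃ c ∈ Ioo a b, f b - f a - f' a * (b - a) = f'' c * (b - a) ^ 2 / 2 := by
  have hF : ∀ x ∈ Icc a b, HasDerivAt (fun x => f x + (b - x) * f' x) ((b - x) * f'' x) x :=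
    fun x hx =>
      ((hf x hx).add (((hasDerivAt_id' x).const_sub b).mul (hf' x hx))).congr_deriv (by ring)
  have hG : ∀ x, HasDerivAt (fun x => -(b - x) ^ 2 / 2) (b - x) x := fun x =>
    ((((hasDerivAt_id' x).const_sub b).pow 2).neg.div_const 2).congr_deriv (by ring)
  obtain ⟨c, hc, hcf⟩ := exists_ratio_hasDerivAt_eq_ratio_slope _ _ hab
    (HasDerivAt.continuousOn hF) (fun x hx => hF x (Ioo_subset_Icc_self hx)) _ _
    (HasDerivAt.continuousOn fun x _ => hG x) (fun x _ => hG x)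
  refine ⟨c, hc, mul_right_cancel₀ (sub_ne_zero.2 hc.2.ne') ?_⟩
  linear_combination -hcf

theorem taylor_two_remainder_bounds {f f' f'' : ℝ → ℝ} {a b lo hi : ℝ} (hab : a < b)
    (hf : ∀ x ∈ Icc a b, HasDerivAt f (f' x) x) (hf' : ∀ x ∈ Icc a b, HasDerivAt f' (f'' x) x)
    (hf'' : ∀ x ∈ Icc a b, f'' x ∈ Icc lo hi) :
    lo * (b - a) ^ 2 / 2 ≤ f b - f a - deriv f a * (b - a) ∧
      f b - f a - deriv f a * (b - a) ≤ hi * (b - a) ^ 2 / 2 := by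
  obtain ⟨c, hc, hcf⟩ := taylor_mean_remainder_lagrange_two hab hf hf'
  have hc' : c ∈ Icc a b := Ioo_subset_Icc_self hc
  rw [(hf a (left_mem_Icc.2 hab.le)).deriv, hcf]
  constructor <;> gcongr
  exacts [(hf'' c hc').1, (hf'' c hc').2]

theorem HasDerivAt.comp_add_mul {F : ℝ → ℝ} {y x d u : ℝ} (hF : HasDerivAt F y (x + u * d)) :
    HasDerivAt (fun t => F (x + t * d)) (y * d) u :=
  hF.comp u ((hasDerivAt_mul_const d).const_add x)

section
variable {f f' f'' F : ℝ → ℝ} {x : ℝ} (δ : ℝ)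

theorem hasDerivAt_mul_log_sub (hf : HasDerivAt f (f' x) x) (hfx : f x ≠ 0)
    (hF : HasDerivAt F (f x) x) :
    HasDerivAt (fun y => δ * log (f y) - F y) (δ * (f' x / f x) - f x) x :=
  ((hf.log hfx).const_mul δ).sub hF

theorem hasDerivAt_mul_div_sub (hf : HasDerivAt f (f' x) x) (hf' : HasDerivAt f' (f'' x) x)
    (hfx : f x ≠ 0) :
    HasDerivAt (fun y => δ * (f' y / f y) - f y)
      (δ * ((f x * f'' x - f' x ^ 2) / f x ^ 2) - f' x) x :=
  ((hf'.div hf hfx).const_mul δ).sub hf |>.congr_deriv (by ring)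

end

theorem mul_div_sub_mem_Icc {δ l l' l'' A B c : ℝ} (hδ₀ : 0 ≤ δ) (hδ₁ : δ ≤ 1) (hl : 0 < l)
    (hconc : l * l'' ≤ l' ^ 2) (hA' : l * l'' - l' ^ 2 ≥ -A * l ^ 2)
    (hc : c ≤ l') (hB : l' ≤ B) :
    δ * ((l * l'' - l' ^ 2) / l ^ 2) - l' ∈ Icc (-(A + B)) (-c) := by
  set q := (l * l'' - l' ^ 2) / l ^ 2
  have hq₀ : q ≤ 0 := div_nonpos_of_nonpos_of_nonneg (by linarith) (by positivity)
  have hqA : -A ≤ q := by rw [le_div_iff₀ (by positivity)]; exact hA'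
  have hδq : q ≤ δ * q := by nlinarith
  have hδq₀ : δ * q ≤ 0 := mul_nonpos_of_nonneg_of_nonpos hδ₀ hq₀
  constructor <;> linarith

theorem mul_neg_div_sq_add_mul_sq_mem_Icc {δ m M x d lo hi q e : ℝ} (hδ : 0 ≤ δ) (hm : 0 < m)
    (hx : x ∈ Icc m M) (hq : q ∈ Icc lo hi) :
    δ * -(d ^ 2 / x ^ 2) + q * e ^ 2 ∈
      Icc (δ * -(d ^ 2 / m ^ 2) + lo * e ^ 2) (δ * -(d ^ 2 / M ^ 2) + hi * e ^ 2) := by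
  have hx₀ : 0 < x := hm.trans_le hx.1
  constructor <;> gcongr
  exacts [hx.1, hq.1, hx.2, hq.2]

theorem taylor_two_remainder_bounds_mul_log_add_comp {g g' g'' ω : ℝ → ℝ}
    {δ h₀ h₁ φ₀ φ₁ m M lo hi : ℝ} (hg : ∀ ψ, HasDerivAt g (g' ψ) ψ)
    (hg' : ∀ ψ, HasDerivAt g' (g'' ψ) ψ) (hg'' : ∀ ψ ∈ uIcc φ₀ φ₁, g'' ψ ∈ Icc lo hi)
    (hδ : 0 ≤ δ) (hm : 0 < m) (hh₀ : h₀ ∈ Icc m M) (hh₁ : h₁ ∈ Icc m M)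
    (hω : ∀ u, ω u = δ * log (h₀ + u * (h₁ - h₀)) + g (φ₀ + u * (φ₁ - φ₀))) :
    (δ * -((h₁ - h₀) ^ 2 / m ^ 2) + lo * (φ₁ - φ₀) ^ 2) / 2 ≤ ω 1 - ω 0 - deriv ω 0 ∧
      ω 1 - ω 0 - deriv ω 0 ≤ (δ * -((h₁ - h₀) ^ 2 / M ^ 2) + hi * (φ₁ - φ₀) ^ 2) / 2 := by
  have hh : ∀ u ∈ Icc (0 : ℝ) 1, h₀ + u * (h₁ - h₀) ∈ Icc m M := fun u hu => by
    simpa only [smul_eq_mul] using (convex_Icc m M).add_smul_sub_mem hh₀ hh₁ hu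
  have hφ : ∀ u ∈ Icc (0 : ℝ) 1, φ₀ + u * (φ₁ - φ₀) ∈ uIcc φ₀ φ₁ := fun u hu => by
    simpa only [smul_eq_mul] using
      (convex_uIcc φ₀ φ₁).add_smul_sub_mem left_mem_uIcc right_mem_uIcc hu
  have hh₀' : ∀ u ∈ Icc (0 : ℝ) 1, h₀ + u * (h₁ - h₀) ≠ 0 := fun u hu =>
    (hm.trans_le (hh u hu).1).ne'
  have hω' : ∀ u ∈ Icc (0 : ℝ) 1, HasDerivAt ω (δ * ((h₀ + u * (h₁ - h₀))⁻¹ * (h₁ - h₀))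
      + g' (φ₀ + u * (φ₁ - φ₀)) * (φ₁ - φ₀)) u := fun u hu => funext hω ▸
    (((hasDerivAt_log (hh₀' u hu)).comp_add_mul.const_mul δ).add (hg _).comp_add_mul)
  have hω'' : ∀ u ∈ Icc (0 : ℝ) 1,
      HasDerivAt (fun u => δ * ((h₀ + u * (h₁ - h₀))⁻¹ * (h₁ - h₀))
        + g' (φ₀ + u * (φ₁ - φ₀)) * (φ₁ - φ₀))
      (δ * -((h₁ - h₀) ^ 2 / (h₀ + u * (h₁ - h₀)) ^ 2)
        + g'' (φ₀ + u * (φ₁ - φ₀)) * (φ₁ - φ₀) ^ 2) u := fun u hu =>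
    ((((hasDerivAt_inv (hh₀' u hu)).comp_add_mul.mul_const _).const_mul δ).add
      ((hg' _).comp_add_mul.mul_const _)).congr_deriv (by ring)
  have := taylor_two_remainder_bounds zero_lt_one hω' hω'' fun u hu =>
    mul_neg_div_sq_add_mul_sq_mem_Icc hδ hm (hh u hu) (hg'' _ (hφ u hu))
  simpa only [sub_zero, one_pow, mul_one] using this

theorem taylor_expansion_loglik_segment_general
    (lam Lam : ℝ → ℝ)
    (hlam1 : Differentiable ℝ lam)
    (hlam2 : Differentiable ℝ (deriv lam))
    (hlam_pos : ∀ x, 0 < lam x)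
    (hLam : ∀ x, HasDerivAt Lam (lam x) x)
    (δ : ℝ) (hδ : δ = 0 ∨ δ = 1)
    (h₀ h₁ φ₀ φ₁ m M c₂ B A : ℝ)
    (hm : 0 < m)
    (hh₀ : m ≤ h₀ ∧ h₀ ≤ M) (hh₁ : m ≤ h₁ ∧ h₁ ≤ M)
    (hψ : ∀ ψ ∈ Set.uIcc φ₀ φ₁,
        lam ψ * deriv (deriv lam) ψ ≤ (deriv lam ψ) ^ 2 ∧
        lam ψ * deriv (deriv lam) ψ - (deriv lam ψ) ^ 2 ≥ -A * (lam ψ) ^ 2 ∧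
        c₂ ≤ deriv lam ψ ∧ deriv lam ψ ≤ B)
    (ω : ℝ → ℝ)
    (hω : ∀ u, ω u = δ * Real.log (h₀ + u * (h₁ - h₀))
        + δ * Real.log (lam (φ₀ + u * (φ₁ - φ₀))) - Lam (φ₀ + u * (φ₁ - φ₀))) :
    -(1 / 2) * (δ * (h₁ - h₀) ^ 2 / m ^ 2 + (A + B) * (φ₁ - φ₀) ^ 2)
        ≤ ω 1 - ω 0 - deriv ω 0 ∧
    ω 1 - ω 0 - deriv ω 0
        ≤ -(1 / 2) * (δ * (h₁ - h₀) ^ 2 / M ^ 2 + c₂ * (φ₁ - φ₀) ^ 2) := by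
  obtain ⟨hδ₀, hδ₁⟩ : 0 ≤ δ ∧ δ ≤ 1 := by rcases hδ with rfl | rfl <;> norm_num
  have hg : ∀ ψ, HasDerivAt (fun ψ => δ * log (lam ψ) - Lam ψ)
      (δ * (deriv lam ψ / lam ψ) - lam ψ) ψ := fun ψ =>
    hasDerivAt_mul_log_sub δ (hlam1 ψ).hasDerivAt (hlam_pos ψ).ne' (hLam ψ)
  have hg' : ∀ ψ, HasDerivAt (fun ψ => δ * (deriv lam ψ / lam ψ) - lam ψ)
      (δ * ((lam ψ * deriv (deriv lam) ψ - deriv lam ψ ^ 2) / lam ψ ^ 2) - deriv lam ψ) ψ :=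
    fun ψ => hasDerivAt_mul_div_sub δ (hlam1 ψ).hasDerivAt (hlam2 ψ).hasDerivAt (hlam_pos ψ).ne'
  have hg'' : ∀ ψ ∈ uIcc φ₀ φ₁, δ * ((lam ψ * deriv (deriv lam) ψ - deriv lam ψ ^ 2) / lam ψ ^ 2)
      - deriv lam ψ ∈ Icc (-(A + B)) (-c₂) := fun ψ hψ' =>
    let ⟨hconc, hA', hc, hB⟩ := hψ ψ hψ'
    mul_div_sub_mem_Icc hδ₀ hδ₁ (hlam_pos ψ) hconc hA' hc hB
  obtain ⟨hlo, hhi⟩ := taylor_two_remainder_bounds_mul_log_add_comp hg hg' hg'' hδ₀ hm hh₀ hh₁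
    fun u => (hω u).trans (add_sub_assoc ..)
  rw [mul_div_assoc, mul_div_assoc]
  constructor <;> linarith

/-- Two-sided quadratic expansion of the log-likelihood along line segments:
the deterministic core of Lemma 2 of "Deep partially linear transformation
model for right-censored survival data". -/
theorem taylor_expansion_loglik_segment
    (lam Lam : ℝ → ℝ)
    (hlam1 : Differentiable ℝ lam)
    (hlam2 : Differentiable ℝ (deriv lam))
    (hlam_pos : ∀ x, 0 < lam x)
    (hLam : ∀ x, HasDerivAt Lam (lam x) x)
    (δ : ℝ) (hδ : δ = 0 ∨ δ = 1)
    (h₀ h₁ φ₀ φ₁ m M c₂ B A : ℝ)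
    (hm : 0 < m) (hmM : m ≤ M) (hc₂ : 0 < c₂) (hc₂B : c₂ ≤ B) (hA : 0 ≤ A)
    (hh₀ : m ≤ h₀ ∧ h₀ ≤ M) (hh₁ : m ≤ h₁ ∧ h₁ ≤ M)
    (hψ : ∀ ψ ∈ Set.uIcc φ₀ φ₁,
        lam ψ * deriv (deriv lam) ψ ≤ (deriv lam ψ) ^ 2 ∧
        lam ψ * deriv (deriv lam) ψ - (deriv lam ψ) ^ 2 ≥ -A * (lam ψ) ^ 2 ∧
        c₂ ≤ deriv lam ψ ∧ deriv lam ψ ≤ B)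
    (ω : ℝ → ℝ)
    (hω : ∀ u, ω u = δ * Real.log (h₀ + u * (h₁ - h₀))
        + δ * Real.log (lam (φ₀ + u * (φ₁ - φ₀))) - Lam (φ₀ + u * (φ₁ - φ₀))) :
    -(1 / 2) * (δ * (h₁ - h₀) ^ 2 / m ^ 2 + (A + B) * (φ₁ - φ₀) ^ 2)
        ≤ ω 1 - ω 0 - deriv ω 0 ∧
    ω 1 - ω 0 - deriv ω 0
        ≤ -(1 / 2) * (δ * (h₁ - h₀) ^ 2 / M ^ 2 + c₂ * (φ₁ - φ₀) ^ 2) :=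
  taylor_expansion_loglik_segment_general lam Lam hlam1 hlam2 hlam_pos hLam δ hδ h₀ h₁ φ₀ φ₁ m M c₂
    B A hm hh₀ hh₁ hψ ω hω
end

section
/- For all constants C₁ > 0 and C₂ > 0 there exist a constant C > 0 and N ∈ ℕ such that for every natural number n ≥ N and all real numbers θ, δ, s, L satisfying n^{−1/2} ≤ θ ≤ 1, δ > 0, δ·(log n)² ≤ θ, 1 ≤ s ≤ C₁·n·δ²·log n, L ≥ e, and log L ≤ C₂·(log n)², one has θ·√(s·log(L/θ)) + (s/√n)·log(L/θ) ≤ C·√n·θ². -/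
/-!
Since `θ ≥ n^{-1/2}` we have `log (L/θ) ≤ log L + (log n)/2 ≤ (C₂ + 1)(log n)²`, while
`δ (log n)² ≤ θ` turns the sparsity bound into `s (log n)³ ≤ C₁ n θ²`. Hence
`A := s log (L/θ) ≤ K n θ²` with `K = C₁ (C₂ + 1)`, and both terms `θ √A` and `A / √n` are at
most a constant times `√n θ²`.
-/

open Real

lemma log_div_le_add_half_log {n θ L : ℝ} (hn : 0 < n) (hL : 0 < L) (hθ : 1 / √n ≤ θ) :
    log (L / θ) ≤ log L + log n / 2 := by
  have hθ0 : 0 < θ := lt_of_lt_of_le (by positivity) hθ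
  have hlogθ : log (1 / √n) ≤ log θ := log_le_log (by positivity) hθ
  rw [one_div, log_inv, log_sqrt hn.le] at hlogθ
  rw [log_div hL.ne' hθ0.ne']
  linarith

lemma mul_pow_three_le_of_le_mul_sq {C₁ n δ s θ ℓ : ℝ} (hC₁ : 0 ≤ C₁) (hn : 0 ≤ n)
    (hδ : 0 ≤ δ) (hℓ : 0 ≤ ℓ) (hδθ : δ * ℓ ^ 2 ≤ θ) (hs : s ≤ C₁ * n * δ ^ 2 * ℓ) :
    s * ℓ ^ 3 ≤ C₁ * n * θ ^ 2 :=
  calc s * ℓ ^ 3 ≤ C₁ * n * δ ^ 2 * ℓ * ℓ ^ 3 := by gcongr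
    _ = C₁ * n * (δ * ℓ ^ 2) ^ 2 := by ring
    _ ≤ C₁ * n * θ ^ 2 := by gcongr

lemma mul_sqrt_add_div_le {θ m A K : ℝ} (hθ : 0 ≤ θ) (hm : 0 < m) (hK : 0 ≤ K)
    (hA : A ≤ K * (m * θ) ^ 2) :
    θ * √A + A / m ≤ (√K + K) * m * θ ^ 2 := by
  have hsqrt : √A ≤ √K * (m * θ) := by
    rw [← sqrt_sq (by positivity : 0 ≤ m * θ), ← sqrt_mul hK]
    exact sqrt_le_sqrt hA
  have hdiv : A / m ≤ K * m * θ ^ 2 := by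
    rw [div_le_iff₀ hm]
    linarith [hA]
  calc θ * √A + A / m ≤ θ * (√K * (m * θ)) + K * m * θ ^ 2 := by gcongr
    _ = (√K + K) * m * θ ^ 2 := by ring

/-- Display (A16) in the proof of Theorem 1 of "Deep partially linear
transformation model for right-censored survival data": the modulus of
continuity bound θ·√(s·log(L/θ)) + (s/√n)·log(L/θ) ≤ C·√n·θ². -/
theorem modulus_of_continuity_rate_bound :
    ∀ C₁ C₂ : ℝ, 0 < C₁ → 0 < C₂ →
      ∃ C : ℝ, 0 < C ∧ ∃ N : ℕ, ∀ n : ℕ, N ≤ n →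
        ∀ θ δ s L : ℝ,
          1 / Real.sqrt n ≤ θ → θ ≤ 1 →
          0 < δ → δ * (Real.log n) ^ 2 ≤ θ →
          1 ≤ s → s ≤ C₁ * n * δ ^ 2 * Real.log n →
          Real.exp 1 ≤ L → Real.log L ≤ C₂ * (Real.log n) ^ 2 →
          θ * Real.sqrt (s * Real.log (L / θ))
              + (s / Real.sqrt n) * Real.log (L / θ)
            ≤ C * Real.sqrt n * θ ^ 2 := by
  intro C₁ C₂ hC₁ hC₂
  refine ⟨√(C₁ * (C₂ + 1)) + C₁ * (C₂ + 1), by positivity, 3, ?_⟩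
  intro n hn θ δ s L hθ _ hδ hδθ hs hsδ hL hlogL
  have hn0 : (0 : ℝ) < n := by positivity
  have hlogn : 1 ≤ log n := by
    rw [le_log_iff_exp_le hn0]
    have hn3 : (3 : ℝ) ≤ n := by exact_mod_cast hn
    linarith [exp_one_lt_d9]
  have hθ0 : 0 < θ := lt_of_lt_of_le (by positivity) hθ
  have hlogdiv : log (L / θ) ≤ (C₂ + 1) * log n ^ 2 := by
    have := log_div_le_add_half_log hn0 (lt_of_lt_of_le (exp_pos 1) hL) hθ
    nlinarith
  have hsparse : s * log n ^ 3 ≤ C₁ * n * θ ^ 2 :=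
    mul_pow_three_le_of_le_mul_sq hC₁.le hn0.le hδ.le (by linarith) hδθ hsδ
  have hkey : s * log (L / θ) ≤ C₁ * (C₂ + 1) * (√n * θ) ^ 2 := by
    rw [mul_pow, sq_sqrt hn0.le]
    have hs0 : 0 ≤ s := by linarith
    calc s * log (L / θ) ≤ s * ((C₂ + 1) * log n ^ 2) := by gcongr
      _ = (C₂ + 1) * (s * log n ^ 2) := by ring
      _ ≤ (C₂ + 1) * (s * log n ^ 3) := by gcongr; norm_num
      _ ≤ (C₂ + 1) * (C₁ * n * θ ^ 2) := by gcongr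
      _ = C₁ * (C₂ + 1) * (n * θ ^ 2) := by ring
  rw [div_mul_eq_mul_div]
  exact mul_sqrt_add_div_le hθ0.le (sqrt_pos.mpr hn0) (by positivity) hkey
end
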